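/- arXiv:2602.12857 — 3 statements merged into one kernel-verified Lean document; each statement's English description precedes it below -/
import Mathlib

section
/- Let n ≥ 2 and let X be a ℤ₂ⁿ-equivariant triangulation of the sphere S^{n−1} in ℝⁿ. Then the number of vertices of X is even and is at least 2n. -/
/-!
The vertex set `V` is finite, avoids `0` and is closed under every sign change of coordinates.
Negation is a fixed-point-free involution of `V`, so `|V|` is even. Since the radial projection
is onto the sphere, no coordinate vanishes on all of `|X|`, hence (coordinate hyperplanes being
convex) not on all vertices. Grouping `V` by coordinate support `S`, each class contains the
`2 ^ |S| ≥ 2 |S|` sign changes of any of its members, and the supports cover all `n` coordinates,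
so `|V| ≥ 2n`.
-/

open Set

noncomputable section

/-- The sign-change map `x ↦ (ε₁x₁, …, εₙxₙ)` on `EuclideanSpace ℝ (Fin n)`. -/
def signMap {n : ℕ} (ε : Fin n → ℝ) (x : EuclideanSpace ℝ (Fin n)) :
    EuclideanSpace ℝ (Fin n) :=
  WithLp.toLp 2 (fun i => ε i * x i)

/-- `X` is a `ℤ₂ⁿ`-equivariant triangulation of the unit sphere `S^{n-1} ⊆ ℝⁿ`. -/
structure IsEquivSphereTriangulation (n : ℕ)
    (X : Geometry.SimplicialComplex ℝ (EuclideanSpace ℝ (Fin n))) : Prop where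
  finite : X.faces.Finite
  zero_not_mem : (0 : EuclideanSpace ℝ (Fin n)) ∉ X.space
  radial_homeo : ∃ φ : X.space ≃ₜ (Metric.sphere (0 : EuclideanSpace ℝ (Fin n)) 1),
      ∀ x : X.space, (φ x : EuclideanSpace ℝ (Fin n)) =
        ‖(x : EuclideanSpace ℝ (Fin n))‖⁻¹ • (x : EuclideanSpace ℝ (Fin n))
  equivariant : ∀ ε : Fin n → ℝ, (∀ i, ε i = 1 ∨ ε i = -1) →
      ∀ s ∈ X.faces, ∃ t ∈ X.faces,
        (t : Set (EuclideanSpace ℝ (Fin n))) = signMap ε '' (s : Set (EuclideanSpace ℝ (Fin n)))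

open Finset

lemma Finset.even_card_of_neg_mem {G : Type*} [AddGroup G] [IsAddTorsionFree G] {V : Finset G}
    (hneg : ∀ v ∈ V, -v ∈ V) (hzero : (0 : G) ∉ V) : Even #V := by
  rw [← ZMod.natCast_eq_zero_iff_even, Finset.card_eq_sum_ones, Nat.cast_sum, Nat.cast_one]
  refine Finset.sum_involution (fun v _ => -v) (fun _ _ => by decide) (fun v hv _ => ?_) hneg
    (fun v _ => neg_neg v)
  exact fun h => hzero (neg_eq_self.mp h ▸ hv)

def IsSignVector {n : ℕ} (ε : Fin n → ℝ) : Prop := ∀ i, ε i = 1 ∨ ε i = -1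

def flipSign {n : ℕ} (T : Finset (Fin n)) : Fin n → ℝ := fun i => if i ∈ T then -1 else 1

def coordSupport {n : ℕ} (x : EuclideanSpace ℝ (Fin n)) : Finset (Fin n) := {i | x i ≠ 0}

section SignMap

variable {n : ℕ}

@[simp]
lemma signMap_apply (ε : Fin n → ℝ) (x : EuclideanSpace ℝ (Fin n)) (i : Fin n) :
    signMap ε x i = ε i * x i := rfl

lemma isSignVector_neg_one : IsSignVector (fun _ : Fin n => (-1 : ℝ)) := fun _ => Or.inr rfl

lemma isSignVector_flipSign (T : Finset (Fin n)) : IsSignVector (flipSign T) := by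
  intro i
  unfold flipSign
  split_ifs <;> simp

lemma signMap_neg_one (x : EuclideanSpace ℝ (Fin n)) : signMap (fun _ => -1) x = -x := by
  ext i
  simp

lemma signMap_flipSign_apply (T : Finset (Fin n)) (x : EuclideanSpace ℝ (Fin n)) (i : Fin n) :
    signMap (flipSign T) x i = if i ∈ T then -x i else x i := by
  simp only [signMap_apply, flipSign]
  split_ifs <;> ring

lemma mem_coordSupport {x : EuclideanSpace ℝ (Fin n)} {i : Fin n} :
    i ∈ coordSupport x ↔ x i ≠ 0 := by
  simp [coordSupport]

lemma coordSupport_signMap {ε : Fin n → ℝ} (hε : IsSignVector ε) (x : EuclideanSpace ℝ (Fin n)) :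
    coordSupport (signMap ε x) = coordSupport x := by
  ext i
  rcases hε i with h | h <;> simp [mem_coordSupport, h]

lemma injOn_signMap_flipSign (x : EuclideanSpace ℝ (Fin n)) :
    Set.InjOn (fun T => signMap (flipSign T) x) (coordSupport x).powerset := by
  intro T₁ h₁ T₂ h₂ h
  simp only [Finset.coe_powerset, Set.mem_preimage, Set.mem_powerset_iff, Finset.coe_subset] at h₁ h₂
  ext i
  have hi := congrArg (· i) h
  simp only [signMap_flipSign_apply] at hi
  by_cases hx : x i = 0
  · exact ⟨fun h => absurd hx (mem_coordSupport.mp (h₁ h)),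
      fun h => absurd hx (mem_coordSupport.mp (h₂ h))⟩
  · split_ifs at hi with hT₁ hT₂ hT₂ <;> first | tauto | exact absurd (by linarith) hx

end SignMap

section SignClosed

variable {n : ℕ} {V : Finset (EuclideanSpace ℝ (Fin n))}

lemma two_pow_card_coordSupport_le
    (hV : ∀ ε, IsSignVector ε → ∀ v ∈ V, signMap ε v ∈ V) {v : EuclideanSpace ℝ (Fin n)}
    (hv : v ∈ V) : 2 ^ #(coordSupport v) ≤ #{w ∈ V | coordSupport w = coordSupport v} := by
  rw [← card_powerset]
  refine card_le_card_of_injOn _ (fun T _ => ?_) (injOn_signMap_flipSign v)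
  rw [mem_coe, mem_filter]
  exact ⟨hV _ (isSignVector_flipSign T) v hv, coordSupport_signMap (isSignVector_flipSign T) v⟩

lemma two_mul_le_card_of_signMap_mem
    (hV : ∀ ε, IsSignVector ε → ∀ v ∈ V, signMap ε v ∈ V) (hcover : ∀ i, ∃ v ∈ V, v i ≠ 0) :
    2 * n ≤ #V := by
  set supports := V.image coordSupport
  have hn : n ≤ ∑ S ∈ supports, #S := by
    calc n = #(univ : Finset (Fin n)) := by simp
      _ ≤ #(supports.biUnion id) := card_le_card fun i _ => by
          obtain ⟨v, hv, hvi⟩ := hcover i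
          exact mem_biUnion.mpr ⟨_, mem_image_of_mem _ hv, mem_coordSupport.mpr hvi⟩
      _ ≤ ∑ S ∈ supports, #S := card_biUnion_le
  calc 2 * n ≤ ∑ S ∈ supports, 2 * #S := by rw [← mul_sum]; omega
    _ ≤ ∑ S ∈ supports, 2 ^ #S := sum_le_sum fun S _ => Nat.mul_le_pow (by norm_num) _
    _ ≤ ∑ S ∈ supports, #{w ∈ V | coordSupport w = S} := sum_le_sum fun S hS => by
        obtain ⟨v, hv, rfl⟩ := mem_image.mp hS
        exact two_pow_card_coordSupport_le hV hv
    _ = #V := (card_eq_sum_card_fiberwise fun _ hv => mem_image_of_mem _ hv).symm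

end SignClosed

lemma Geometry.SimplicialComplex.space_subset_of_vertices_subset {E : Type*} [AddCommGroup E]
    [Module ℝ E] {K : Geometry.SimplicialComplex ℝ E} {C : Set E} (hC : Convex ℝ C)
    (hK : K.vertices ⊆ C) : K.space ⊆ C := by
  intro x hx
  obtain ⟨s, hs, hxs⟩ := Geometry.SimplicialComplex.mem_space_iff.mp hx
  refine convexHull_min (fun v hv => hK ?_) hC hxs
  rw [Geometry.SimplicialComplex.vertices_eq]
  exact Set.mem_biUnion hs hv

namespace IsEquivSphereTriangulation

variable {n : ℕ} {X : Geometry.SimplicialComplex ℝ (EuclideanSpace ℝ (Fin n))}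
  (hX : IsEquivSphereTriangulation n X)
include hX

lemma vertices_finite : X.vertices.Finite := by
  rw [Geometry.SimplicialComplex.vertices_eq]
  exact hX.finite.biUnion fun s _ => s.finite_toSet

lemma ne_zero_of_mem_vertices {v : EuclideanSpace ℝ (Fin n)} (hv : v ∈ X.vertices) : v ≠ 0 :=
  fun h => hX.zero_not_mem (h ▸ X.vertices_subset_space hv)

lemma signMap_mem_vertices {ε : Fin n → ℝ} (hε : IsSignVector ε) {v : EuclideanSpace ℝ (Fin n)}
    (hv : v ∈ X.vertices) : signMap ε v ∈ X.vertices := by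
  obtain ⟨t, ht, hts⟩ := hX.equivariant ε hε {v} hv
  rw [coe_singleton, Set.image_singleton, coe_eq_singleton] at hts
  exact Geometry.SimplicialComplex.mem_vertices.mpr (hts ▸ ht)

lemma exists_mem_vertices_apply_ne_zero (i : Fin n) : ∃ v ∈ X.vertices, v i ≠ 0 := by
  by_contra! h
  have hspace : X.space ⊆ {x | x i = 0} :=
    X.space_subset_of_vertices_subset (convex_hyperplane (EuclideanSpace.proj i).isLinear 0) h
  obtain ⟨φ, hφ⟩ := hX.radial_homeo
  have he : EuclideanSpace.single i (1 : ℝ) ∈ Metric.sphere 0 1 := by simp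
  set x := φ.symm ⟨_, he⟩
  have hxi : (x : EuclideanSpace ℝ (Fin n)) i = 0 := hspace x.2
  have hx := congrArg (· i) (hφ x)
  rw [show φ x = ⟨_, he⟩ from φ.apply_symm_apply _] at hx
  simp [hxi] at hx

end IsEquivSphereTriangulation

theorem stmt0_general (n : ℕ)
    (X : Geometry.SimplicialComplex ℝ (EuclideanSpace ℝ (Fin n)))
    (hX : IsEquivSphereTriangulation n X) :
    Even X.vertices.ncard ∧ 2 * n ≤ X.vertices.ncard := by
  have hfin := hX.vertices_finite
  have : IsAddTorsionFree (EuclideanSpace ℝ (Fin n)) := .of_isTorsionFree ℝ _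
  rw [Set.ncard_eq_toFinset_card _ hfin]
  refine ⟨even_card_of_neg_mem (fun v hv => ?_) ?_, two_mul_le_card_of_signMap_mem ?_ ?_⟩
  · simpa [← signMap_neg_one] using hX.signMap_mem_vertices isSignVector_neg_one (by simpa using hv)
  · simpa using fun h => hX.ne_zero_of_mem_vertices h rfl
  · simpa using fun ε hε v hv => hX.signMap_mem_vertices hε hv
  · simpa using hX.exists_mem_vertices_apply_ne_zero

theorem stmt0 (n : ℕ) (hn : 2 ≤ n)
    (X : Geometry.SimplicialComplex ℝ (EuclideanSpace ℝ (Fin n)))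
    (hX : IsEquivSphereTriangulation n X) :
    Even X.vertices.ncard ∧ 2 * n ≤ X.vertices.ncard :=
  stmt0_general n X hX
end
end

section
/- Let n ≥ 1 and let σ ⊂ ℝ^{n+1} be the convex hull of n+1 affinely independent points p₀, …, pₙ (an n-simplex). Let H be an affine hyperplane of ℝ^{n+1} and let μ be the orthogonal reflection of ℝ^{n+1} across H. If μ maps σ onto σ and σ is not contained in H, then exactly n−1 of the points p₀, …, pₙ lie in H; moreover, there exist two families of n+1 affinely independent points A and B in ℝ^{n+1} such that σ = convexHull(A) ∪ convexHull(B) and μ maps convexHull(A) onto convexHull(B). -/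
/-!
The reflection `μ` is an affine automorphism of the simplex, so it permutes its extreme points,
which are the vertices. Every difference `x - μ x` is normal to `H`, and the normal space is a
line; since no two disjoint pairs of vertices of a simplex have parallel differences, `μ` swaps
exactly one pair `pᵢ, pⱼ` and fixes the other `n - 1` vertices, i.e. these lie in `H`. The
midpoint `m` of `pᵢ pⱼ` is then fixed too, and replacing `pⱼ`, resp. `pᵢ`, by `m` cuts the
simplex into two simplices that `μ` exchanges.
-/

open Set

noncomputable section

open Function

section Convex

variable {𝕜 E F ι : Type*} [Field 𝕜] [LinearOrder 𝕜] [IsStrictOrderedRing 𝕜]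
  [AddCommGroup E] [Module 𝕜 E] [AddCommGroup F] [Module 𝕜 F]

theorem mem_convexHull_range_iff_exists_weights [Fintype ι] {q : ι → E} {x : E} :
    x ∈ convexHull 𝕜 (range q) ↔
      ∃ w : ι → 𝕜, (∀ k, 0 ≤ w k) ∧ ∑ k, w k = 1 ∧ ∑ k, w k • q k = x := by
  classical
  refine ⟨fun hx => ?_, fun ⟨w, hw₀, hw₁, hx⟩ =>
    mem_convexHull_of_exists_fintype w q hw₀ hw₁ mem_range_self hx⟩
  rw [convexHull_range_eq_exists_affineCombination] at hx
  obtain ⟨s, w, hw₀, hw₁, rfl⟩ := hx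
  have hw₁' : ∑ k, (s : Set ι).indicator w k = 1 := by
    rwa [Finset.sum_indicator_subset _ s.subset_univ]
  refine ⟨(s : Set ι).indicator w, fun k => ?_, hw₁', ?_⟩
  · by_cases hk : k ∈ s <;> simp [hk, hw₀]
  · rw [Finset.affineCombination_indicator_subset _ _ s.subset_univ,
      Finset.affineCombination_eq_linear_combination _ _ _ hw₁']

theorem AffineIndependent.mem_extremePoints_convexHull_range [Fintype ι] {q : ι → E}
    (hq : AffineIndependent 𝕜 q) (i : ι) : q i ∈ (convexHull 𝕜 (range q)).extremePoints 𝕜 := by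
  classical
  refine mem_extremePoints_iff_left.2 ⟨subset_convexHull 𝕜 _ (mem_range_self i), ?_⟩
  rintro x₁ hx₁ x₂ hx₂ ⟨a, b, ha, hb, hab, hx⟩
  obtain ⟨w₁, hw₁₀, hw₁, rfl⟩ := mem_convexHull_range_iff_exists_weights.1 hx₁
  obtain ⟨w₂, hw₂₀, hw₂, rfl⟩ := mem_convexHull_range_iff_exists_weights.1 hx₂
  have hcoord : ∀ k, a * w₁ k + b * w₂ k = (Pi.single i 1 : ι → 𝕜) k := fun k =>
    hq.eq_of_sum_eq_sum (s := Finset.univ) (w₁ := fun k => a * w₁ k + b * w₂ k)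
      (w₂ := Pi.single i 1) (by simp [Finset.sum_add_distrib, ← Finset.mul_sum, hw₁, hw₂, hab])
      (by simpa [add_smul, mul_smul, Finset.sum_add_distrib, ← Finset.smul_sum, Pi.single_apply]
        using hx) k (Finset.mem_univ k)
  have hzero : ∀ k ≠ i, w₁ k = 0 := fun k hk => by
    have h := hcoord k
    rw [Pi.single_eq_of_ne hk] at h
    have := (add_eq_zero_iff_of_nonneg (mul_nonneg ha.le (hw₁₀ k)) (mul_nonneg hb.le (hw₂₀ k))).1 h
    exact (mul_eq_zero.1 this.1).resolve_left ha.ne'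
  have hone : w₁ i = 1 := by
    rwa [Finset.sum_eq_single i (fun k _ => hzero k) (by simp)] at hw₁
  rw [Finset.sum_eq_single i (fun k _ hk => by rw [hzero k hk, zero_smul]) (by simp), hone,
    one_smul]

theorem AffineIndependent.extremePoints_convexHull_range [Fintype ι] {q : ι → E}
    (hq : AffineIndependent 𝕜 q) : (convexHull 𝕜 (range q)).extremePoints 𝕜 = range q :=
  extremePoints_convexHull_subset.antisymm
    (range_subset_iff.2 hq.mem_extremePoints_convexHull_range)

theorem AffineEquiv.image_extremePoints (e : E ≃ᵃ[𝕜] F) (s : Set E) :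
    e '' s.extremePoints 𝕜 = (e '' s).extremePoints 𝕜 := by
  ext b
  obtain ⟨a, rfl⟩ := e.surjective b
  have : ∀ x y, e '' openSegment 𝕜 x y = openSegment 𝕜 (e x) (e y) :=
    image_openSegment _ e.toAffineMap
  simp only [mem_extremePoints, e.surjective.forall, e.injective.mem_set_image,
    e.injective.eq_iff, ← this]

theorem AffineIndependent.image_range_eq_of_image_convexHull_eq [Fintype ι] {q : ι → E}
    (hq : AffineIndependent 𝕜 q) (e : E ≃ᵃ[𝕜] E)
    (he : e '' convexHull 𝕜 (range q) = convexHull 𝕜 (range q)) : e '' range q = range q := by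
  rw [← hq.extremePoints_convexHull_range, e.image_extremePoints, he]

theorem sum_smul_mem_convexHull_range_update_midpoint [Fintype ι] [DecidableEq ι] (q : ι → E)
    {i j : ι} (hij : i ≠ j) {w : ι → 𝕜} (hw₀ : ∀ k, 0 ≤ w k) (hw₁ : ∑ k, w k = 1)
    (hw : w j ≤ w i) :
    ∑ k, w k • q k ∈ convexHull 𝕜 (range (update q j (midpoint 𝕜 (q i) (q j)))) := by
  -- As `q j = 2 • m - q i`, the weight `w j` of `q j` becomes `2 * w j` at `m`, taken from `q i`.
  set w' : ι → 𝕜 := fun k => w k + (if k = j then w j else 0) - (if k = i then w j else 0)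
  have hterm : ∀ k, w' k • update q j (midpoint 𝕜 (q i) (q j)) k
      = w k • q k + (if k = j then w j • q i else 0) - (if k = i then w j • q i else 0) := by
    intro k
    by_cases hkj : k = j
    · rw [hkj]
      simp only [w', update_self, if_pos, if_neg hij.symm, midpoint_eq_smul_add, invOf_eq_inv]
      module
    by_cases hki : k = i
    · rw [hki]
      simp [w', hij, sub_smul]
    · simp [w', hkj, hki]
  refine mem_convexHull_of_exists_fintype w' _ (fun k => ?_) ?_ (fun k => mem_range_self k) ?_
  · simp only [w']
    split_ifs with hkj hki hki
    · exact absurd (hki.symm.trans hkj) hij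
    · linarith [hw₀ k, hw₀ j]
    · rw [hki]
      linarith
    · linarith [hw₀ k]
  · simp [w', Finset.sum_add_distrib, Finset.sum_sub_distrib, hw₁]
  · simp [hterm, Finset.sum_add_distrib, Finset.sum_sub_distrib]

theorem convexHull_range_eq_union_update_midpoint [Fintype ι] [DecidableEq ι] (q : ι → E)
    {i j : ι} (hij : i ≠ j) :
    convexHull 𝕜 (range q) =
      convexHull 𝕜 (range (update q j (midpoint 𝕜 (q i) (q j)))) ∪
        convexHull 𝕜 (range (update q i (midpoint 𝕜 (q i) (q j)))) := by
  have hm : midpoint 𝕜 (q i) (q j) ∈ convexHull 𝕜 (range q) :=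
    (convex_convexHull 𝕜 _).midpoint_mem (subset_convexHull 𝕜 _ (mem_range_self i))
      (subset_convexHull 𝕜 _ (mem_range_self j))
  refine subset_antisymm (fun x hx => ?_) (union_subset ?_ ?_)
  · obtain ⟨w, hw₀, hw₁, rfl⟩ := mem_convexHull_range_iff_exists_weights.1 hx
    rcases le_total (w j) (w i) with h | h
    · exact Or.inl (sum_smul_mem_convexHull_range_update_midpoint q hij hw₀ hw₁ h)
    · rw [midpoint_comm]
      exact Or.inr (sum_smul_mem_convexHull_range_update_midpoint q hij.symm hw₀ hw₁ h)
  all_goals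
    refine convexHull_min (range_subset_iff.2 fun k => ?_) (convex_convexHull 𝕜 _)
    rw [update_apply]
    split_ifs
    exacts [hm, subset_convexHull 𝕜 _ (mem_range_self k)]

theorem AffineMap.image_convexHull_range_update_midpoint [DecidableEq ι] (f : E →ᵃ[𝕜] E)
    {q : ι → E} {i j : ι} (hf : ∀ k, f (q k) = q (Equiv.swap i j k)) :
    f '' convexHull 𝕜 (range (update q j (midpoint 𝕜 (q i) (q j)))) =
      convexHull 𝕜 (range (update q i (midpoint 𝕜 (q i) (q j)))) := by
  have hm : f (midpoint 𝕜 (q i) (q j)) = midpoint 𝕜 (q i) (q j) := by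
    rw [f.map_midpoint, hf, hf, Equiv.swap_apply_left, Equiv.swap_apply_right, midpoint_comm]
  have hcomp : f ∘ update q j (midpoint 𝕜 (q i) (q j)) =
      update q i (midpoint 𝕜 (q i) (q j)) ∘ Equiv.swap i j := by
    funext k
    by_cases hkj : k = j
    · simp [hkj, hm]
    by_cases hki : k = i
    · rw [hki] at hkj ⊢
      simp [update_of_ne hkj, hf, update_of_ne (Ne.symm hkj)]
    · simp [hkj, hki, hf, Equiv.swap_apply_of_ne_of_ne hki hkj]
  rw [f.image_convexHull, ← range_comp, hcomp, (Equiv.swap i j).surjective.range_comp]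

end Convex

section AffineIndependent

variable {k V P ι : Type*} [DivisionRing k] [AddCommGroup V] [Module k V] [AddTorsor V P]
  {q : ι → P}

theorem AffineIndependent.vsub_notMem_span_singleton_vsub (hq : AffineIndependent k q)
    {a b c d : ι} (hc : c ∉ ({a, b, d} : Set ι)) : q c -ᵥ q d ∉ k ∙ (q a -ᵥ q b) := by
  intro h
  obtain ⟨r, hr⟩ := Submodule.mem_span_singleton.1 h
  refine hc ((hq.mem_affineSpan_iff c _).1 ?_)
  rw [← vsub_vadd (q c) (q d), ← hr]
  refine AffineSubspace.vadd_mem_of_mem_direction ?_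
    (mem_affineSpan k (mem_image_of_mem q (by simp)))
  rw [direction_affineSpan]
  exact Submodule.smul_mem _ _
    (vsub_mem_vectorSpan k (mem_image_of_mem q (by simp)) (mem_image_of_mem q (by simp)))

theorem AffineIndependent.update_midpoint [Invertible (2 : k)] [DecidableEq ι]
    (hq : AffineIndependent k q) {i j : ι} (hij : i ≠ j) :
    AffineIndependent k (update q j (midpoint k (q i) (q j))) := by
  refine hq.affineIndependent_update_of_notMem_affineSpan fun hm => ?_
  have hi : q i ∈ affineSpan k (q '' {x | x ≠ j}) := mem_affineSpan k (mem_image_of_mem q hij)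
  have hj : q j ∈ affineSpan k (q '' {x | x ≠ j}) := by
    rw [← Equiv.pointReflection_midpoint_left (q i) (q j) (R := k), Equiv.pointReflection_apply]
    exact AffineSubspace.vadd_mem_of_mem_direction (AffineSubspace.vsub_mem_direction hm hi) hm
  exact (hq.mem_affineSpan_iff j _).1 hj rfl

end AffineIndependent

theorem Equiv.ncard_setOf_swap_apply_eq_self {α : Type*} [Fintype α] [DecidableEq α] {i j : α}
    (hij : i ≠ j) : {k | swap i j k = k}.ncard = Fintype.card α - 2 := by
  have : {k | swap i j k = k} = ↑(swap i j).supportᶜ := by ext; simp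
  rw [this, ncard_coe_finset, Finset.card_compl, Perm.card_support_swap hij]

namespace EuclideanGeometry

variable {V P : Type*} [NormedAddCommGroup V] [InnerProductSpace ℝ V] [MetricSpace P]
  [NormedAddTorsor V P] (s : AffineSubspace ℝ P) [Nonempty s] [s.direction.HasOrthogonalProjection]

theorem vsub_reflection_mem_direction_orthogonal (p : P) :
    p -ᵥ reflection s p ∈ s.directionᗮ := by
  have h : p -ᵥ reflection s p = (2 : ℝ) • (p -ᵥ orthogonalProjection s p) := by
    rw [reflection_apply', vsub_vadd_eq_vsub_sub,
      ← neg_vsub_eq_vsub_rev (orthogonalProjection s p : P) p]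
    module
  rw [h]
  exact Submodule.smul_mem _ _ (vsub_orthogonalProjection_mem_direction_orthogonal s p)

end EuclideanGeometry

open EuclideanGeometry in
theorem AffineIndependent.exists_swap_of_reflection_image_convexHull_eq {V ι : Type*}
    [NormedAddCommGroup V] [InnerProductSpace ℝ V] [Fintype ι] [DecidableEq ι] {q : ι → V}
    (hq : AffineIndependent ℝ q) (s : AffineSubspace ℝ V) [Nonempty s]
    [s.direction.HasOrthogonalProjection] (hs : Module.finrank ℝ s.directionᗮ = 1)
    (hnsub : ¬ range q ⊆ s)
    (hmap : reflection s '' convexHull ℝ (range q) = convexHull ℝ (range q)) :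
    ∃ i j, i ≠ j ∧ ∀ k, reflection s (q k) = q (Equiv.swap i j k) := by
  have hperm : ∀ k, ∃ l, reflection s (q k) = q l := fun k =>
    (hq.image_range_eq_of_image_convexHull_eq (reflection s).toAffineEquiv hmap).subset
      (mem_image_of_mem _ (mem_range_self k)) |>.imp fun _ => Eq.symm
  obtain ⟨i, hi⟩ : ∃ i, q i ∉ s := by simpa [range_subset_iff] using hnsub
  obtain ⟨j, hij⟩ := hperm i
  have hji : reflection s (q j) = q i := by rw [← hij, reflection_reflection]
  have hne : i ≠ j := by
    rintro rfl
    exact hi ((reflection_eq_self_iff _).1 hij)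
  have hspan : s.directionᗮ = ℝ ∙ (q i -ᵥ q j) := by
    refine eq_span_singleton_of_mem_of_finrank_eq_one hs ?_
      (vsub_ne_zero.2 (hq.injective.ne hne))
    rw [← hij]
    exact vsub_reflection_mem_direction_orthogonal s (q i)
  refine ⟨i, j, hne, fun k => ?_⟩
  by_cases hki : k = i
  · rw [hki, Equiv.swap_apply_left, hij]
  by_cases hkj : k = j
  · rw [hkj, Equiv.swap_apply_right, hji]
  rw [Equiv.swap_apply_of_ne_of_ne hki hkj]
  obtain ⟨l, hl⟩ := hperm k
  by_contra hkl
  rw [hl, hq.injective.eq_iff] at hkl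
  apply hq.vsub_notMem_span_singleton_vsub (a := i) (b := j) (c := k) (d := l)
    (by simp [hki, hkj, Ne.symm hkl])
  rw [← hspan, ← hl]
  exact vsub_reflection_mem_direction_orthogonal s (q k)

theorem stmt7_general (n : ℕ)
    (p : Fin (n + 1) → EuclideanSpace ℝ (Fin (n + 1)))
    (hp : AffineIndependent ℝ p)
    (H : AffineSubspace ℝ (EuclideanSpace ℝ (Fin (n + 1)))) [Nonempty H]
    (hH : Module.finrank ℝ H.direction = n)
    (hnsub : ¬ convexHull ℝ (Set.range p) ⊆ (H : Set (EuclideanSpace ℝ (Fin (n + 1)))))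
    (hmap : (EuclideanGeometry.reflection H) '' convexHull ℝ (Set.range p)
        = convexHull ℝ (Set.range p)) :
    {i : Fin (n + 1) | p i ∈ H}.ncard = n - 1 ∧
      ∃ (A B : Fin (n + 1) → EuclideanSpace ℝ (Fin (n + 1))),
        AffineIndependent ℝ A ∧ AffineIndependent ℝ B ∧
        convexHull ℝ (Set.range p) = convexHull ℝ (Set.range A) ∪ convexHull ℝ (Set.range B) ∧
        (EuclideanGeometry.reflection H) '' convexHull ℝ (Set.range A)
          = convexHull ℝ (Set.range B) := by
  classical
  have hcodim : Module.finrank ℝ H.directionᗮ = 1 :=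
    Submodule.finrank_add_finrank_orthogonal' (by rw [hH, finrank_euclideanSpace_fin])
  obtain ⟨i, j, hij, hswap⟩ := hp.exists_swap_of_reflection_image_convexHull_eq H hcodim
    (fun h => hnsub (convexHull_min h H.convex)) hmap
  have hfixed : {k | p k ∈ H} = {k | Equiv.swap i j k = k} := by
    ext k
    rw [mem_ofPred, mem_ofPred, ← EuclideanGeometry.reflection_eq_self_iff, hswap,
      hp.injective.eq_iff]
  refine ⟨?_, _, _, hp.update_midpoint hij,
    midpoint_comm (R := ℝ) (p j) (p i) ▸ hp.update_midpoint hij.symm,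
    convexHull_range_eq_union_update_midpoint p hij,
    AffineMap.image_convexHull_range_update_midpoint
      (EuclideanGeometry.reflection H).toAffineEquiv.toAffineMap hswap⟩
  rw [hfixed, Equiv.ncard_setOf_swap_apply_eq_self hij, Fintype.card_fin]
  omega

theorem stmt7 (n : ℕ) (hn : 1 ≤ n)
    (p : Fin (n + 1) → EuclideanSpace ℝ (Fin (n + 1)))
    (hp : AffineIndependent ℝ p)
    (H : AffineSubspace ℝ (EuclideanSpace ℝ (Fin (n + 1)))) [Nonempty H]
    (hH : Module.finrank ℝ H.direction = n)
    (hnsub : ¬ convexHull ℝ (Set.range p) ⊆ (H : Set (EuclideanSpace ℝ (Fin (n + 1)))))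
    (hmap : (EuclideanGeometry.reflection H) '' convexHull ℝ (Set.range p)
        = convexHull ℝ (Set.range p)) :
    {i : Fin (n + 1) | p i ∈ H}.ncard = n - 1 ∧
      ∃ (A B : Fin (n + 1) → EuclideanSpace ℝ (Fin (n + 1))),
        AffineIndependent ℝ A ∧ AffineIndependent ℝ B ∧
        convexHull ℝ (Set.range p) = convexHull ℝ (Set.range A) ∪ convexHull ℝ (Set.range B) ∧
        (EuclideanGeometry.reflection H) '' convexHull ℝ (Set.range A)
          = convexHull ℝ (Set.range B) :=
  stmt7_general n p hp H hH hnsub hmap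
end
end

section
/- Let m ≥ 1, k ≥ 1, and let Δ ⊂ ℝ^m be the convex hull of k+1 affinely independent points such that the origin 0 lies in the intrinsic (relative) interior of Δ, and such that for every i ∈ {1, …, m} the coordinate reflection μᵢ (the linear map negating the i-th coordinate and fixing the others) maps Δ onto Δ. Then k = 1 and Δ lies on a coordinate axis: there exist an index j ∈ {1, …, m} and a real number c ≠ 0 such that Δ is the segment with endpoints c·eⱼ and −c·eⱼ, where eⱼ is the j-th standard basis vector. -/
open Set Function

section Aux

variable {ι E : Type*} [Fintype ι] [DecidableEq ι] [AddCommGroup E] [Module ℝ E]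

noncomputable def myRefl (m : ℕ) (i : Fin m) : (Fin m → ℝ) ≃ₗ[ℝ] (Fin m → ℝ) where
  toFun x := Function.update x i (-(x i))
  invFun x := Function.update x i (-(x i))
  map_add' x y := by
    funext l
    by_cases h : l = i <;> simp [Function.update_apply, h] <;> ring
  map_smul' r x := by
    funext l
    by_cases h : l = i <;> simp [Function.update_apply, h] <;> ring
  left_inv x := by
    funext l
    by_cases h : l = i <;> simp [Function.update_apply, h] <;> ring
  right_inv x := by
    funext l
    by_cases h : l = i <;> simp [Function.update_apply, h] <;> ring

lemma myRefl_coe (m : ℕ) (i : Fin m) :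
    ⇑(myRefl m i) = fun x : Fin m → ℝ => Function.update x i (-(x i)) := rfl

lemma my_exists_coords {p : ι → E} {x : E} (hx : x ∈ convexHull ℝ (Set.range p)) :
    ∃ w : ι → ℝ, (∀ s, 0 ≤ w s) ∧ ∑ s, w s = 1 ∧ ∑ s, w s • p s = x := by
  classical
  rw [convexHull_range_eq_exists_affineCombination] at hx
  obtain ⟨s, w, hw0, hw1, rfl⟩ := hx
  refine ⟨fun i => if i ∈ s then w i else 0, fun i => by by_cases h : i ∈ s <;> simp [h, hw0 i], ?_, ?_⟩
  · rw [Finset.sum_ite_mem, Finset.univ_inter, hw1]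
  · rw [s.affineCombination_eq_linear_combination _ _ hw1]
    simp only [ite_smul, zero_smul]
    rw [Finset.sum_ite_mem, Finset.univ_inter]

lemma my_vertex_extreme {p : ι → E} (hp : AffineIndependent ℝ p) (t : ι) :
    p t ∈ Set.extremePoints ℝ (convexHull ℝ (Set.range p)) := by
  classical
  rw [mem_extremePoints]
  refine ⟨subset_convexHull ℝ _ (mem_range_self t), fun x₁ h₁ x₂ h₂ hseg => ?_⟩
  obtain ⟨w₁, hw₁0, hw₁1, hw₁⟩ := my_exists_coords h₁
  obtain ⟨w₂, hw₂0, hw₂1, hw₂⟩ := my_exists_coords h₂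
  obtain ⟨a, b, ha, hb, hab, hx⟩ := hseg
  have key : ∀ s ∈ Finset.univ, a * w₁ s + b * w₂ s = (if s = t then (1:ℝ) else 0) := by
    refine hp.eq_of_sum_eq_sum ?_ ?_
    · rw [Finset.sum_add_distrib, ← Finset.mul_sum, ← Finset.mul_sum, hw₁1, hw₂1, mul_one, mul_one, hab]
      simp [Finset.sum_ite_eq']
    · simp only [add_smul, mul_smul, Finset.sum_add_distrib, ← Finset.smul_sum, hw₁, hw₂,
        ite_smul, one_smul, zero_smul, Finset.sum_ite_eq', Finset.mem_univ, if_pos, hx]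
  have hzero : ∀ s, s ≠ t → w₁ s = 0 ∧ w₂ s = 0 := by
    intro s hs
    have := key s (Finset.mem_univ s)
    rw [if_neg hs] at this
    have h1 : a * w₁ s = 0 ∧ b * w₂ s = 0 :=
      (add_eq_zero_iff_of_nonneg (mul_nonneg ha.le (hw₁0 s)) (mul_nonneg hb.le (hw₂0 s))).mp this
    exact ⟨by rcases mul_eq_zero.mp h1.1 with h | h; exact absurd h ha.ne'; exact h,
      by rcases mul_eq_zero.mp h1.2 with h | h; exact absurd h hb.ne'; exact h⟩
  have hval : ∀ (w : ι → ℝ), (∀ s, s ≠ t → w s = 0) → ∑ s, w s = 1 → ∑ s, w s • p s = p t := by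
    intro w hw hsum
    have : ∑ s, w s = w t := by
      rw [Finset.sum_eq_single t]
      · intro s _ hs; exact hw s hs
      · simp
    rw [this] at hsum
    rw [Finset.sum_eq_single t]
    · rw [hsum, one_smul]
    · intro s _ hs; rw [hw s hs, zero_smul]
    · simp
  constructor
  · rw [← hw₁]; exact hval w₁ (fun s hs => (hzero s hs).1) hw₁1
  · rw [← hw₂]; exact hval w₂ (fun s hs => (hzero s hs).2) hw₂1

lemma my_four_rel {p : ι → E} (hp : AffineIndependent ℝ p) {a b c d : ι}
    (h : p a + p d = p b + p c) (s : ι) :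
    ((if s = a then (1:ℝ) else 0) + (if s = d then 1 else 0)) =
      ((if s = b then (1:ℝ) else 0) + (if s = c then 1 else 0)) := by
  classical
  have h1 : ∑ s : ι, ((if s = a then (1:ℝ) else 0) + (if s = d then 1 else 0)) =
      ∑ s : ι, ((if s = b then (1:ℝ) else 0) + (if s = c then 1 else 0)) := by
    simp [Finset.sum_add_distrib, Finset.sum_ite_eq']
  have h2 : ∑ s : ι, ((if s = a then (1:ℝ) else 0) + (if s = d then 1 else 0)) • p s =
      ∑ s : ι, ((if s = b then (1:ℝ) else 0) + (if s = c then 1 else 0)) • p s := by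
    simp only [add_smul, Finset.sum_add_distrib, ite_smul, one_smul, zero_smul,
      Finset.sum_ite_eq', Finset.mem_univ, if_pos]
    exact h
  exact hp.eq_of_sum_eq_sum h1 h2 s (Finset.mem_univ s)

end Aux

noncomputable section

theorem stmt8 (m k : ℕ) (hm : 1 ≤ m) (hk : 1 ≤ k)
    (p : Fin (k + 1) → (Fin m → ℝ)) (hp : AffineIndependent ℝ p)
    (Δ : Set (Fin m → ℝ)) (hΔ : Δ = convexHull ℝ (Set.range p))
    (h0 : (0 : Fin m → ℝ) ∈ intrinsicInterior ℝ Δ)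
    (hrefl : ∀ i : Fin m, (fun x : Fin m → ℝ => Function.update x i (-(x i))) '' Δ = Δ) :
    k = 1 ∧ ∃ (j : Fin m) (c : ℝ), c ≠ 0 ∧
      Δ = segment ℝ (Pi.single j c : Fin m → ℝ) (Pi.single j (-c) : Fin m → ℝ) := by
  classical
  -- the vertex set is the set of extreme points
  have hE : Set.extremePoints ℝ Δ = Set.range p := by
    apply Subset.antisymm
    · rw [hΔ]; exact extremePoints_convexHull_subset
    · rintro x ⟨t, rfl⟩; rw [hΔ]; exact my_vertex_extreme hp t
  -- reflections permute vertices
  have hperm : ∀ i : Fin m,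
      (fun x : Fin m → ℝ => Function.update x i (-(x i))) '' Set.range p = Set.range p := by
    intro i
    have h := image_extremePoints (myRefl m i) Δ
    rw [myRefl_coe, hrefl i, hE] at h
    exact h
  have hmem : ∀ (t : Fin (k+1)) (i : Fin m),
      ∃ t', p t' = Function.update (p t) i (-(p t i)) := by
    intro t i
    have h : Function.update (p t) i (-(p t i)) ∈ Set.range p := by
      rw [← hperm i]; exact ⟨p t, ⟨t, rfl⟩, rfl⟩
    obtain ⟨t', h⟩ := h
    exact ⟨t', h⟩
  -- at most one nonzero coordinate per vertex
  have hC : ∀ (t : Fin (k+1)) (i j : Fin m), i ≠ j → p t i ≠ 0 → p t j = 0 := by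
    intro t i j hij hi
    by_contra hj
    obtain ⟨b, hb⟩ := hmem t i
    obtain ⟨c, hc⟩ := hmem t j
    obtain ⟨d, hd⟩ := hmem c i
    rw [hc] at hd
    have hrel : p t + p d = p b + p c := by
      funext l
      rw [hd, hb, hc]
      simp only [Pi.add_apply, Function.update_apply]
      rcases eq_or_ne l i with rfl | hli
      · simp [hij]
      · rcases eq_or_ne l j with rfl | hlj
        · simp [hli]
        · simp [hli, hlj]
    have htb : t ≠ b := by
      intro h
      apply hi
      have h2 : p t i = p b i := by rw [h]
      rw [hb, Function.update_self] at h2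
      exact by linarith
    have htc : t ≠ c := by
      intro h
      apply hj
      have h2 : p t j = p c j := by rw [h]
      rw [hc, Function.update_self] at h2
      exact by linarith
    have h4 := my_four_rel hp hrel t
    rw [if_pos rfl, if_neg htb, if_neg htc] at h4
    split_ifs at h4 <;> norm_num at h4
  -- no vertex is zero
  have hne0 : ∀ t, p t ≠ 0 := by
    intro a ha
    haveI : Nontrivial (Fin (k+1)) := Fin.nontrivial_iff_two_le.mpr (by omega)
    obtain ⟨b, hba⟩ := exists_ne a
    have hvb : p b ≠ 0 := fun h => hba (hp.injective (h.trans ha.symm))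
    obtain ⟨j, hj⟩ := Function.ne_iff.mp hvb
    simp only [Pi.zero_apply] at hj
    obtain ⟨c, hc⟩ := hmem b j
    have hcneg : p c = -(p b) := by
      rw [hc]
      funext l
      rcases eq_or_ne l j with rfl | hlj
      · simp
      · have : p b l = 0 := hC b j l (Ne.symm hlj) hj
        simp [Function.update_apply, hlj, this]
    have hrel : p a + p a = p b + p c := by
      rw [ha, hcneg]; abel
    have hab : a ≠ b := fun h => hvb (by rw [← h, ha])
    have hac : a ≠ c := by
      intro h
      apply hvb
      have := hcneg
      rw [← h, ha] at this
      simpa [neg_eq_zero] using this.symm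
    have h4 := my_four_rel hp hrel a
    rw [if_pos rfl, if_neg hab, if_neg hac] at h4
    norm_num at h4
  -- all vertices lie on the same axis
  have hsame : ∀ t t' (i j : Fin m), p t i ≠ 0 → p t' j ≠ 0 → i = j := by
    intro t t' i j hi hj
    by_contra hij
    have ht'i : p t' i = 0 := hC t' j i (Ne.symm hij) hj
    obtain ⟨c, hcEq⟩ := hmem t i
    have hcneg : p c = -(p t) := by
      rw [hcEq]
      funext l
      rcases eq_or_ne l i with rfl | hli
      · simp
      · have : p t l = 0 := hC t i l (Ne.symm hli) hi
        simp [Function.update_apply, hli, this]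
    obtain ⟨d, hdEq⟩ := hmem t' j
    have hdneg : p d = -(p t') := by
      rw [hdEq]
      funext l
      rcases eq_or_ne l j with rfl | hlj
      · simp
      · have : p t' l = 0 := hC t' j l (Ne.symm hlj) hj
        simp [Function.update_apply, hlj, this]
    have hrel : p t + p c = p t' + p d := by
      rw [hcneg, hdneg]; abel
    have htt' : t ≠ t' := by
      intro h
      rw [h] at hi
      exact hi ht'i
    have htd : t ≠ d := by
      intro h
      apply hi
      have h2 : p t i = p d i := by rw [h]
      rw [hdneg] at h2
      simpa [ht'i] using h2
    have h4 := my_four_rel hp hrel t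
    rw [if_pos rfl, if_neg htt', if_neg htd] at h4
    split_ifs at h4 <;> norm_num at h4
  -- the common axis
  set i0 : Fin (k+1) := ⟨0, by omega⟩ with hi0
  obtain ⟨j, hj⟩ := Function.ne_iff.mp (hne0 i0)
  simp only [Pi.zero_apply] at hj
  have haxis : ∀ t l, l ≠ j → p t l = 0 := by
    intro t l hl
    by_contra h
    exact hl (hsame t i0 l j h hj)
  -- collinearity gives k = 1
  have hk1 : k = 1 := by
    have hcol : Collinear ℝ (Set.range p) := by
      rw [collinear_iff_of_mem (Set.mem_range_self i0)]
      refine ⟨Pi.single j 1, ?_⟩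
      rintro x ⟨t, rfl⟩
      refine ⟨p t j - p i0 j, ?_⟩
      funext l
      rcases eq_or_ne l j with rfl | hlj
      · simp
      · simp [haxis t l hlj, haxis i0 l hlj, Pi.single_apply, hlj]
    have hfin : Module.finrank ℝ (vectorSpan ℝ (Set.range p)) = k :=
      hp.finrank_vectorSpan (Fintype.card_fin _)
    have hle := hcol.finrank_le_one
    omega
  subst hk1
  refine ⟨rfl, j, p i0 j, hj, ?_⟩
  -- the second vertex is -(p i0)
  obtain ⟨c', hc'⟩ := hmem i0 j
  have hc'neg : p c' = -(p i0) := by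
    rw [hc']
    funext l
    rcases eq_or_ne l j with rfl | hlj
    · simp
    · simp [Function.update_apply, hlj, haxis i0 l hlj]
  have hc'ne : c' ≠ i0 := by
    intro h
    apply hj
    rw [h] at hc'neg
    have h2 := congrFun hc'neg j
    simp only [Pi.neg_apply] at h2
    linarith
  have hrange : Set.range p = {p i0, p c'} := by
    apply Subset.antisymm
    · rintro x ⟨t, rfl⟩
      have hti : t = i0 ∨ t = c' := by
        have h1 : (t : ℕ) < 2 := t.isLt
        have h2 : (c' : ℕ) < 2 := c'.isLt
        have h3 : (c' : ℕ) ≠ (i0 : ℕ) := fun h => hc'ne (Fin.ext h)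
        have h4 : (i0 : ℕ) = 0 := rfl
        rcases (by omega : (t : ℕ) = 0 ∨ (t : ℕ) = 1) with h | h
        · left; exact Fin.ext (by rw [h, h4])
        · right
          apply Fin.ext
          omega
      rcases hti with rfl | rfl
      · exact Set.mem_insert _ _
      · exact Set.mem_insert_of_mem _ rfl
    · rintro x (rfl | rfl) <;> exact Set.mem_range_self _
  have hp0 : p i0 = Pi.single j (p i0 j) := by
    funext l
    rcases eq_or_ne l j with rfl | hlj
    · simp
    · simp [Pi.single_apply, hlj, haxis i0 l hlj]
  have hp1 : p c' = Pi.single j (-(p i0 j)) := by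
    rw [hc'neg, hp0]
    funext l
    simp [Pi.single_apply]
    split <;> simp
  rw [hΔ, hrange, convexHull_pair, ← hp0, ← hp1]
end
end
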